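/- arXiv:1605.09173 — 6 statements merged into one kernel-verified Lean document; each statement's English description precedes it below -/
import Mathlib

section
/- Let G be a transitive permutation group on a finite set Ω of size n generated by involutions ρ₀,…,ρ_{r−1} such that each Γ_i (the subgroup generated by all generators except ρ_i) is intransitive. Then r ≤ n − 1. -/
/-!
For each `i` some `a i` is carried by `ρ i` out of its `Γ i`-orbit, since otherwise every element
of `G` would preserve the `Γ i`-orbits and `Γ i` would be transitive with `G`. Join `a i` to
`ρ i (a i)`. For `j ≠ i` the `j`-th edge stays inside a `Γ i`-orbit, so deleting the `i`-th edge
disconnects its endpoints: every edge is a bridge, the graph is a forest with `r` distinct edges,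
and a forest on `n` vertices has at most `n - 1` edges.
-/

theorem Setoid.rel_of_sym2_mk_eq {V : Type*} {R : Setoid V} {x y a b : V} (h : s(x, y) = s(a, b))
    (hab : R a b) : R x y := by
  rcases Sym2.eq_iff.mp h with ⟨rfl, rfl⟩ | ⟨rfl, rfl⟩
  · exact hab
  · exact R.symm hab

namespace SimpleGraph

variable {V : Type*}

theorem IsAcyclic.card_edgeSet_le [Finite V] {G : SimpleGraph V} (hG : G.IsAcyclic) :
    Nat.card G.edgeSet ≤ Nat.card V - 1 := by
  cases isEmpty_or_nonempty V
  · simp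
  obtain ⟨T, hGT, -, hT⟩ := connected_top.exists_isTree_le_of_le_of_isAcyclic le_top hG
  have hcard := ((isTree_iff_connected_and_card (G := T)).mp hT).2
  have := Nat.card_mono (Set.toFinite T.edgeSet) (edgeSet_subset_edgeSet.mpr hGT)
  omega

theorem reachable_le_of_adj_le {G : SimpleGraph V} {R : Setoid V} (h : ∀ x y, G.Adj x y → R x y) :
    ∀ x y, G.Reachable x y → R x y := by
  rw [reachable_eq_reflTransGen]
  exact Relation.reflTransGen_le_of_equivalence_of_le R.iseqv h

section Separated

variable {ι : Type*} {u v : ι → V} {R : ι → Setoid V}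

theorem injective_sym2_mk_of_separated
    (hsame : ∀ i j, j ≠ i → R i (u j) (v j)) (hsep : ∀ i, ¬ R i (u i) (v i)) :
    Function.Injective fun i => s(u i, v i) := by
  intro i j hij
  by_contra hne
  exact hsep i (Setoid.rel_of_sym2_mk_eq hij (hsame i j (Ne.symm hne)))

theorem isAcyclic_fromEdgeSet_of_separated
    (hsame : ∀ i j, j ≠ i → R i (u j) (v j)) (hsep : ∀ i, ¬ R i (u i) (v i)) :
    (fromEdgeSet (Set.range fun i => s(u i, v i))).IsAcyclic := by
  rw [isAcyclic_iff_forall_adj_isBridge]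
  rintro x y ⟨⟨i, hi⟩, -⟩
  rw [← hi, isBridge_iff]
  refine fun hreach => hsep i (reachable_le_of_adj_le ?_ _ _ hreach)
  rintro x' y' ⟨⟨⟨j, hj⟩, hxy⟩, hne⟩
  refine Setoid.rel_of_sym2_mk_eq hj.symm (hsame i j ?_)
  rintro rfl
  exact hne ⟨hj.symm, hxy⟩

theorem card_le_card_sub_one_of_separated [Finite V]
    (hsame : ∀ i j, j ≠ i → R i (u j) (v j)) (hsep : ∀ i, ¬ R i (u i) (v i)) :
    Nat.card ι ≤ Nat.card V - 1 := by
  set G := fromEdgeSet (Set.range fun i => s(u i, v i))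
  have hedge : ∀ i, s(u i, v i) ∈ G.edgeSet := fun i =>
    ⟨⟨i, rfl⟩, fun hdiag => hsep i (by rw [Sym2.mk_isDiag_iff.mp hdiag])⟩
  calc Nat.card ι ≤ Nat.card G.edgeSet :=
        Nat.card_le_card_of_injective (fun i => ⟨_, hedge i⟩)
          fun i j hij => injective_sym2_mk_of_separated hsame hsep (Subtype.ext_iff.mp hij)
    _ ≤ Nat.card V - 1 := (isAcyclic_fromEdgeSet_of_separated hsame hsep).card_edgeSet_le

end Separated

end SimpleGraph

namespace Subgroup

variable {G α : Type*} [Group G] [MulAction G α] {S : Set G}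

theorem rel_smul_of_mem_closure (R : Setoid α) (hS : ∀ s ∈ S, ∀ a, R (s • a) a) {g : G}
    (hg : g ∈ closure S) (a : α) : R (g • a) a := by
  induction hg using closure_induction generalizing a with
  | mem s hs => exact hS s hs a
  | one => simpa only [one_smul] using R.refl a
  | mul x y _ _ hx hy => simpa [mul_smul] using R.trans (hx (y • a)) (hy a)
  | inv x _ hx => simpa using R.symm (hx (x⁻¹ • a))

theorem exists_smul_notMem_orbit_of_closure_transitive {H : Subgroup G}
    (htrans : ∀ a b : α, ∃ g ∈ closure S, g • a = b) (hH : ¬ ∀ a b : α, ∃ g ∈ H, g • a = b) :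
    ∃ s ∈ S, ∃ a : α, s • a ∉ MulAction.orbit H a := by
  by_contra! hS
  refine hH fun a b => ?_
  obtain ⟨g, hg, rfl⟩ := htrans a b
  obtain ⟨⟨h, hh⟩, hha⟩ := rel_smul_of_mem_closure (MulAction.orbitRel H α) hS hg a
  exact ⟨h, hh, hha⟩

end Subgroup

theorem rank_le_degree_sub_one_general
    {Ω : Type*} [Fintype Ω] {r : ℕ} (ρ : Fin r → Equiv.Perm Ω)
    (htrans : ∀ a b : Ω, ∃ g ∈ Subgroup.closure (Set.range ρ), g a = b)
    (hintrans : ∀ i : Fin r,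
      ¬ ∀ a b : Ω, ∃ g ∈ Subgroup.closure (ρ '' {j | j ≠ i}), g a = b) :
    r ≤ Fintype.card Ω - 1 := by
  set Γ := fun i => Subgroup.closure (ρ '' {j | j ≠ i})
  have hΓ : ∀ i j, j ≠ i → ρ j ∈ Γ i := fun i j hj => Subgroup.subset_closure ⟨j, hj, rfl⟩
  have hcut : ∀ i, ∃ a, ρ i a ∉ MulAction.orbit (Γ i) a := by
    intro i
    obtain ⟨_, ⟨j, rfl⟩, a, ha⟩ :=
      Subgroup.exists_smul_notMem_orbit_of_closure_transitive (α := Ω) htrans (hintrans i)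
    obtain rfl : j = i := by
      by_contra hj
      exact ha ⟨⟨ρ j, hΓ i j hj⟩, rfl⟩
    exact ⟨a, ha⟩
  choose a ha using hcut
  have := SimpleGraph.card_le_card_sub_one_of_separated (u := fun i => ρ i (a i)) (v := a)
    (R := fun i => MulAction.orbitRel (Γ i) Ω) (fun i j hj => ⟨⟨ρ j, hΓ i j hj⟩, rfl⟩) ha
  simpa [Nat.card_eq_fintype_card] using this

/-- If a transitive permutation group of degree `n` generated by `r` involutions
has all maximal parabolic subgroups intransitive, then `r ≤ n - 1`. -/
theorem rank_le_degree_sub_one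
    {Ω : Type*} [Fintype Ω] {r : ℕ} (ρ : Fin r → Equiv.Perm Ω)
    (hinv : ∀ i, ρ i * ρ i = 1) (hne : ∀ i, ρ i ≠ 1)
    (htrans : ∀ a b : Ω, ∃ g ∈ Subgroup.closure (Set.range ρ), g a = b)
    (hintrans : ∀ i : Fin r,
      ¬ ∀ a b : Ω, ∃ g ∈ Subgroup.closure (ρ '' {j | j ≠ i}), g a = b) :
    r ≤ Fintype.card Ω - 1 :=
  rank_le_degree_sub_one_general ρ htrans hintrans
end

section
/- In a 2-fracture graph of a permutation group Γ (a graph on the permuted set with exactly two i-labeled edges per generator index i, each joining points in different Γ_i-orbits), every cycle contains either zero or exactly two edges with any given label i. In particular, a 2-fracture graph has no multiple edges. -/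
/-!
An edge of the 2-fracture graph that does not carry label `i` is a `ρ j`-step with `j ≠ i`, so it
stays inside a `Γ_i`-orbit, while both `i`-edges cross between `Γ_i`-orbits. Walking around a closed
walk that uses exactly one `i`-edge would therefore join the endpoints of that edge inside a single
`Γ_i`-orbit. A cycle uses each edge at most once, so it contains zero or two `i`-edges. An `i`-edge
is never a `j`-edge for `j ≠ i`, since `ρ i ∈ Γ_j` joins its endpoints.
-/

open SimpleGraph Equiv MulAction

lemma List.count_add_count_eq_countP {α : Type*} [DecidableEq α] {a b : α} (hab : a ≠ b)
    (l : List α) : l.count a + l.count b = l.countP (fun x => x = a ∨ x = b) := by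
  induction l with
  | nil => rfl
  | cons x l ih =>
    simp only [List.count_cons, List.countP_cons, ← ih, beq_iff_eq]
    by_cases hxa : x = a <;> by_cases hxb : x = b <;> simp_all <;> omega

lemma Sym2.rel_of_eq {α : Type*} {R : α → α → Prop} [Std.Symm R] {a b x y : α}
    (h : s(x, y) = s(a, b)) (hab : R a b) : R x y := by
  rcases Sym2.eq_iff.1 h with ⟨rfl, rfl⟩ | ⟨rfl, rfl⟩
  exacts [hab, symm_of R hab]

lemma Equiv.Perm.involutive_of_mul_self_eq_one {α : Type*} {σ : Perm α} (hσ : σ * σ = 1) :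
    Function.Involutive σ :=
  fun x => DFunLike.congr_fun hσ x

lemma MulAction.orbitRel_subgroup_perm_iff {α : Type*} {H : Subgroup (Perm α)} {a b : α} :
    orbitRel H α a b ↔ ∃ g ∈ H, g a = b := by
  rw [comm_of (orbitRel H α)]
  simp [orbitRel_apply, mem_orbit_iff, Subgroup.smul_def, Perm.smul_def]

namespace SimpleGraph.Walk

variable {V : Type*} {G : SimpleGraph V} {R : V → V → Prop}

lemma rel_of_forall_mem_edges (hR : Equivalence R) {u v : V} (w : G.Walk u v)
    (h : ∀ x y, s(x, y) ∈ w.edges → R x y) : R u v := by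
  induction w with
  | nil => exact hR.refl _
  | cons _ p ih => exact hR.trans (h _ _ (by simp)) (ih fun x y hxy => h x y (by simp [hxy]))

lemma not_rel_of_countP_edges_eq_one (hR : Equivalence R) {S : Sym2 V → Prop} [DecidablePred S]
    {u v : V} (w : G.Walk u v) (hS : ∀ x y, s(x, y) ∈ w.edges → (S s(x, y) ↔ ¬ R x y))
    (hcount : w.edges.countP S = 1) : ¬ R u v := by
  induction w with
  | nil => simp at hcount
  | @cons x x' y _ p ih =>
    have hS' : ∀ a b, s(a, b) ∈ p.edges → (S s(a, b) ↔ ¬ R a b) :=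
      fun a b hab => hS a b (by simp [hab])
    rw [edges_cons, List.countP_cons] at hcount
    by_cases hfirst : S s(x, x')
    · have hcross : ¬ R x x' := (hS x x' (by simp)).1 hfirst
      have hnone : ∀ e ∈ p.edges, ¬ S e := by simpa [hfirst] using hcount
      have hrest : R x' y := p.rel_of_forall_mem_edges hR fun a b hab =>
        not_not.1 fun hR' => hnone _ hab ((hS' a b hab).2 hR')
      exact fun hxy => hcross (hR.trans hxy (hR.symm hrest))
    · have hstep : R x x' := not_not.1 fun h => hfirst ((hS x x' (by simp)).2 h)
      exact fun hxy => ih hS' (by simpa [hfirst] using hcount) (hR.trans (hR.symm hstep) hxy)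

end SimpleGraph.Walk

section TwoFracture

variable {Ω : Type*} {r : ℕ} {ρ : Fin r → Perm Ω} {f : Fin r → (Ω × Ω) × (Ω × Ω)} {i j : Fin r}
  {x y : Ω}

/-- `f i = ((a, b), (c, d))` lists the two `i`-edges `{a, b}` and `{c, d}`. -/
def HasLabel (f : Fin r → (Ω × Ω) × (Ω × Ω)) (i : Fin r) (e : Sym2 Ω) : Prop :=
  e = s((f i).1.1, (f i).1.2) ∨ e = s((f i).2.1, (f i).2.2)

instance [DecidableEq Ω] : DecidablePred (HasLabel f i) := fun _ => instDecidableOr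

def twoFractureGraph (f : Fin r → (Ω × Ω) × (Ω × Ω)) : SimpleGraph Ω :=
  fromRel fun x y => ∃ i, HasLabel f i s(x, y)

lemma twoFractureGraph.exists_hasLabel_of_adj (h : (twoFractureGraph f).Adj x y) :
    ∃ i, HasLabel f i s(x, y) := by
  rcases (fromRel_adj _ _ _).1 h with ⟨-, hxy | hyx⟩
  · exact hxy
  · simpa only [Sym2.eq_swap (a := y)] using hyx

lemma apply_eq_of_hasLabel (hinv : ∀ i, ρ i * ρ i = 1)
    (hmaps : ∀ i, ρ i (f i).1.1 = (f i).1.2 ∧ ρ i (f i).2.1 = (f i).2.2)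
    (h : HasLabel f i s(x, y)) : ρ i x = y := by
  have : Std.Symm (ρ i · = ·) :=
    Function.symm_apply_eq_iff.2 (Perm.involutive_of_mul_self_eq_one (hinv i))
  rcases h with h | h
  exacts [Sym2.rel_of_eq (R := (ρ i · = ·)) h (hmaps i).1,
    Sym2.rel_of_eq (R := (ρ i · = ·)) h (hmaps i).2]

lemma not_orbitRel_of_hasLabel
    (hcross₁ : ∀ g ∈ Subgroup.closure (ρ '' {j | j ≠ i}), g (f i).1.1 ≠ (f i).1.2)
    (hcross₂ : ∀ g ∈ Subgroup.closure (ρ '' {j | j ≠ i}), g (f i).2.1 ≠ (f i).2.2)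
    (h : HasLabel f i s(x, y)) : ¬ orbitRel (Subgroup.closure (ρ '' {j | j ≠ i})) Ω x y := by
  intro hxy
  rcases h with h | h
  · obtain ⟨g, hg, hga⟩ := orbitRel_subgroup_perm_iff.1 (Sym2.rel_of_eq h.symm hxy)
    exact hcross₁ g hg hga
  · obtain ⟨g, hg, hga⟩ := orbitRel_subgroup_perm_iff.1 (Sym2.rel_of_eq h.symm hxy)
    exact hcross₂ g hg hga

lemma orbitRel_of_hasLabel_of_ne (hinv : ∀ i, ρ i * ρ i = 1)
    (hmaps : ∀ i, ρ i (f i).1.1 = (f i).1.2 ∧ ρ i (f i).2.1 = (f i).2.2) (hij : i ≠ j)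
    (h : HasLabel f i s(x, y)) : orbitRel (Subgroup.closure (ρ '' {k | k ≠ j})) Ω x y :=
  orbitRel_subgroup_perm_iff.2
    ⟨ρ i, Subgroup.subset_closure ⟨i, hij, rfl⟩, apply_eq_of_hasLabel hinv hmaps h⟩

lemma twoFractureGraph.hasLabel_iff_not_orbitRel (hinv : ∀ i, ρ i * ρ i = 1)
    (hmaps : ∀ i, ρ i (f i).1.1 = (f i).1.2 ∧ ρ i (f i).2.1 = (f i).2.2)
    (hcross₁ : ∀ g ∈ Subgroup.closure (ρ '' {j | j ≠ i}), g (f i).1.1 ≠ (f i).1.2)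
    (hcross₂ : ∀ g ∈ Subgroup.closure (ρ '' {j | j ≠ i}), g (f i).2.1 ≠ (f i).2.2)
    (hadj : (twoFractureGraph f).Adj x y) :
    HasLabel f i s(x, y) ↔ ¬ orbitRel (Subgroup.closure (ρ '' {j | j ≠ i})) Ω x y := by
  refine ⟨not_orbitRel_of_hasLabel hcross₁ hcross₂, fun hxy => ?_⟩
  obtain ⟨j, hj⟩ := twoFractureGraph.exists_hasLabel_of_adj hadj
  obtain rfl : j = i := not_not.1 fun hji => hxy (orbitRel_of_hasLabel_of_ne hinv hmaps hji hj)
  exact hj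

lemma not_hasLabel_of_hasLabel_of_ne (hinv : ∀ i, ρ i * ρ i = 1)
    (hmaps : ∀ i, ρ i (f i).1.1 = (f i).1.2 ∧ ρ i (f i).2.1 = (f i).2.2)
    (hcross₁ : ∀ g ∈ Subgroup.closure (ρ '' {k | k ≠ j}), g (f j).1.1 ≠ (f j).1.2)
    (hcross₂ : ∀ g ∈ Subgroup.closure (ρ '' {k | k ≠ j}), g (f j).2.1 ≠ (f j).2.2)
    (hij : i ≠ j) (h : HasLabel f i s(x, y)) : ¬ HasLabel f j s(x, y) := fun hj =>
  not_orbitRel_of_hasLabel hcross₁ hcross₂ hj (orbitRel_of_hasLabel_of_ne hinv hmaps hij h)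

lemma twoFractureGraph.count_add_count_eq_zero_or_two_of_isCycle [DecidableEq Ω]
    (hinv : ∀ i, ρ i * ρ i = 1)
    (hmaps : ∀ i, ρ i (f i).1.1 = (f i).1.2 ∧ ρ i (f i).2.1 = (f i).2.2)
    (hPQ : s((f i).1.1, (f i).1.2) ≠ s((f i).2.1, (f i).2.2))
    (hcross₁ : ∀ g ∈ Subgroup.closure (ρ '' {j | j ≠ i}), g (f i).1.1 ≠ (f i).1.2)
    (hcross₂ : ∀ g ∈ Subgroup.closure (ρ '' {j | j ≠ i}), g (f i).2.1 ≠ (f i).2.2)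
    {v : Ω} {w : (twoFractureGraph f).Walk v v} (hw : w.IsCycle) :
    w.edges.count s((f i).1.1, (f i).1.2) + w.edges.count s((f i).2.1, (f i).2.2) = 0 ∨
      w.edges.count s((f i).1.1, (f i).1.2) + w.edges.count s((f i).2.1, (f i).2.2) = 2 := by
  have hP := List.nodup_iff_count_le_one.1 hw.edges_nodup s((f i).1.1, (f i).1.2)
  have hQ := List.nodup_iff_count_le_one.1 hw.edges_nodup s((f i).2.1, (f i).2.2)
  have hne :
      w.edges.count s((f i).1.1, (f i).1.2) + w.edges.count s((f i).2.1, (f i).2.2) ≠ 1 := by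
    rw [List.count_add_count_eq_countP hPQ]
    exact fun h => w.not_rel_of_countP_edges_eq_one (S := HasLabel f i) (orbitRel _ Ω).iseqv
      (fun _ _ hxy =>
        hasLabel_iff_not_orbitRel hinv hmaps hcross₁ hcross₂ (w.adj_of_mem_edges hxy))
      h ((orbitRel _ Ω).iseqv.refl v)
  omega

end TwoFracture

theorem two_fracture_cycle_zero_or_two_edges_general
    {Ω : Type*} [DecidableEq Ω] {r : ℕ} (ρ : Fin r → Equiv.Perm Ω)
    (hinv : ∀ i, ρ i * ρ i = 1)
    (f : Fin r → (Ω × Ω) × (Ω × Ω))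
    (hf : ∀ i : Fin r,
      ρ i (f i).1.1 = (f i).1.2 ∧ ρ i (f i).2.1 = (f i).2.2 ∧
      s((f i).1.1, (f i).1.2) ≠ s((f i).2.1, (f i).2.2) ∧
      (∀ g ∈ Subgroup.closure (ρ '' {j | j ≠ i}), g (f i).1.1 ≠ (f i).1.2) ∧
      (∀ g ∈ Subgroup.closure (ρ '' {j | j ≠ i}), g (f i).2.1 ≠ (f i).2.2)) :
    (∀ (v : Ω)
      (w : (SimpleGraph.fromRel (fun x y =>
          ∃ i : Fin r, s(x, y) = s((f i).1.1, (f i).1.2) ∨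
            s(x, y) = s((f i).2.1, (f i).2.2))).Walk v v),
      w.IsCycle → ∀ i : Fin r,
        w.edges.count s((f i).1.1, (f i).1.2) +
          w.edges.count s((f i).2.1, (f i).2.2) = 0 ∨
        w.edges.count s((f i).1.1, (f i).1.2) +
          w.edges.count s((f i).2.1, (f i).2.2) = 2) ∧
    (∀ i j : Fin r, i ≠ j →
      s((f i).1.1, (f i).1.2) ≠ s((f j).1.1, (f j).1.2) ∧
      s((f i).1.1, (f i).1.2) ≠ s((f j).2.1, (f j).2.2) ∧
      s((f i).2.1, (f i).2.2) ≠ s((f j).1.1, (f j).1.2) ∧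
      s((f i).2.1, (f i).2.2) ≠ s((f j).2.1, (f j).2.2)) := by
  have hmaps : ∀ i, ρ i (f i).1.1 = (f i).1.2 ∧ ρ i (f i).2.1 = (f i).2.2 :=
    fun i => ⟨(hf i).1, (hf i).2.1⟩
  refine ⟨fun v w hw i => twoFractureGraph.count_add_count_eq_zero_or_two_of_isCycle hinv hmaps
    (hf i).2.2.1 (hf i).2.2.2.1 (hf i).2.2.2.2 hw, fun i j hij => ?_⟩
  have hP := not_or.1 <|
    not_hasLabel_of_hasLabel_of_ne hinv hmaps (hf j).2.2.2.1 (hf j).2.2.2.2 hij (Or.inl rfl)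
  have hQ := not_or.1 <|
    not_hasLabel_of_hasLabel_of_ne hinv hmaps (hf j).2.2.2.1 (hf j).2.2.2.2 hij (Or.inr rfl)
  exact ⟨hP.1, hP.2, hQ.1, hQ.2⟩

/-- In a 2-fracture graph, every cycle contains zero or exactly two edges with a
given label, and edges with different labels are distinct (no multiple edges). -/
theorem two_fracture_cycle_zero_or_two_edges
    {Ω : Type*} [Fintype Ω] [DecidableEq Ω] {r : ℕ} (ρ : Fin r → Equiv.Perm Ω)
    (hinv : ∀ i, ρ i * ρ i = 1) (hne : ∀ i, ρ i ≠ 1)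
    (hintrans : ∀ i : Fin r,
      ¬ ∀ a b : Ω, ∃ g ∈ Subgroup.closure (ρ '' {j | j ≠ i}), g a = b)
    (f : Fin r → (Ω × Ω) × (Ω × Ω))
    (hf : ∀ i : Fin r,
      ρ i (f i).1.1 = (f i).1.2 ∧ ρ i (f i).2.1 = (f i).2.2 ∧
      s((f i).1.1, (f i).1.2) ≠ s((f i).2.1, (f i).2.2) ∧
      (∀ g ∈ Subgroup.closure (ρ '' {j | j ≠ i}), g (f i).1.1 ≠ (f i).1.2) ∧
      (∀ g ∈ Subgroup.closure (ρ '' {j | j ≠ i}), g (f i).2.1 ≠ (f i).2.2)) :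
    (∀ (v : Ω)
      (w : (SimpleGraph.fromRel (fun x y =>
          ∃ i : Fin r, s(x, y) = s((f i).1.1, (f i).1.2) ∨
            s(x, y) = s((f i).2.1, (f i).2.2))).Walk v v),
      w.IsCycle → ∀ i : Fin r,
        w.edges.count s((f i).1.1, (f i).1.2) +
          w.edges.count s((f i).2.1, (f i).2.2) = 0 ∨
        w.edges.count s((f i).1.1, (f i).1.2) +
          w.edges.count s((f i).2.1, (f i).2.2) = 2) ∧
    (∀ i j : Fin r, i ≠ j →
      s((f i).1.1, (f i).1.2) ≠ s((f j).1.1, (f j).1.2) ∧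
      s((f i).1.1, (f i).1.2) ≠ s((f j).2.1, (f j).2.2) ∧
      s((f i).2.1, (f i).2.2) ≠ s((f j).1.1, (f j).1.2) ∧
      s((f i).2.1, (f i).2.2) ≠ s((f j).2.1, (f j).2.2)) :=
  two_fracture_cycle_zero_or_two_edges_general ρ hinv f hf
end

section
/- Let Γ = ⟨α₀,…,α_{d−1}⟩ be a transitive permutation group on {1,…,n} with n ≥ 5, and define α_d = (i, n+1)(n+2, n+3) for some i ∈ {1,…,n}, and α_{d+1} = (n+1, n+2)(n+3, n+4). Then Γ* = ⟨α₀,…,α_{d+1}⟩ acting on {1,…,n+4} is isomorphic to S_{n+4} if it contains an odd permutation, and to A_{n+4} otherwise. -/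
/-!
A block of `Γstar` through `p4` is stabilised by `⟨α⟩` and by `αd`, which fix `p4`; if it
contains a second point, chasing it along `αd` and `αd1` shows that it is everything, so
`Γstar` is primitive. If `g ∈ ⟨α⟩` moves `i` to `j ≠ i`, then `g αd g⁻¹ = (j p1)(p2 p3)`, so
`αd * g αd g⁻¹ = (i p1)(j p1)` is a 3-cycle. By Jordan's theorem a primitive group containing
a 3-cycle contains the alternating group, which has index 2.
-/

open Equiv Equiv.Perm MulAction

section

variable {β : Type*}

theorem MulAction.IsBlock.apply_mem_of_apply_mem {G : Subgroup (Perm β)} {B : Set β}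
    (hB : IsBlock G B) {g : Perm β} (hg : g ∈ G) {a x : β} (ha : a ∈ B) (hga : g a ∈ B)
    (hx : x ∈ B) : g x ∈ B := by
  rw [← hB.smul_eq_of_mem (g := ⟨g, hg⟩) ha hga]
  exact Set.smul_mem_smul_set hx

variable [DecidableEq β]

theorem swap_mul_swap_mul_swap_of_ne {a b x y : β} (hxa : x ≠ a) (hxb : x ≠ b) (hya : y ≠ a)
    (hyb : y ≠ b) : swap a b * swap x y * swap a b = swap x y := by
  have := swap_apply_apply (swap a b) x y
  rwa [swap_apply_of_ne_of_ne hxa hxb, swap_apply_of_ne_of_ne hya hyb, swap_inv, eq_comm] at this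

theorem isThreeCycle_swap_mul_swap_mul_conj [Fintype β] {a b c d : β} {g : Perm β}
    (hab : a ≠ b) (hca : c ≠ a) (hcb : c ≠ b) (hda : d ≠ a) (hdb : d ≠ b)
    (hga : g a ≠ a) (hgb : g b = b) (hgc : g c = c) (hgd : g d = d) :
    IsThreeCycle (swap a b * swap c d * (g * (swap a b * swap c d) * g⁻¹)) := by
  have hconj : g * (swap a b * swap c d) * g⁻¹ = swap (g a) b * swap c d := by
    rw [show g * (swap a b * swap c d) * g⁻¹ = g * swap a b * g⁻¹ * (g * swap c d * g⁻¹) by group,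
      ← swap_apply_apply, ← swap_apply_apply, hgb, hgc, hgd]
  have hgab : g a ≠ b := hgb ▸ g.injective.ne hab
  have hgac : g a ≠ c := hgc ▸ g.injective.ne hca.symm
  have hgad : g a ≠ d := hgd ▸ g.injective.ne hda.symm
  have hprod : swap a b * swap c d * (g * (swap a b * swap c d) * g⁻¹) = swap b a * swap b (g a) :=
    calc swap a b * swap c d * (g * (swap a b * swap c d) * g⁻¹)
        = swap a b * (swap c d * swap (g a) b * swap c d) := by rw [hconj]; group
      _ = swap b a * swap b (g a) := by
        rw [swap_mul_swap_mul_swap_of_ne hgac hgad hcb.symm hdb.symm, swap_comm a, swap_comm (g a)]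
  rw [hprod]
  exact isThreeCycle_swap_mul_swap_same hab.symm hgab.symm hga.symm

theorem isPreprimitive_of_swap_mul_swap_mem {G : Subgroup (Perm β)} {S : Set β}
    {i p₁ p₂ p₃ p₄ : β} (hi₁ : i ≠ p₁) (hi₂ : i ≠ p₂) (hi₃ : i ≠ p₃) (hi₄ : i ≠ p₄)
    (h₁₂ : p₁ ≠ p₂) (h₁₃ : p₁ ≠ p₃) (h₁₄ : p₁ ≠ p₄) (h₂₃ : p₂ ≠ p₃) (h₂₄ : p₂ ≠ p₄)
    (h₃₄ : p₃ ≠ p₄) (hiS : i ∈ S) (hcover : ∀ x, x ∈ S ∨ x = p₁ ∨ x = p₂ ∨ x = p₃ ∨ x = p₄)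
    (htrans : ∀ x ∈ S, ∀ y ∈ S, ∃ g ∈ G, g p₄ = p₄ ∧ g x = y)
    (hτ : swap i p₁ * swap p₂ p₃ ∈ G) (hτ' : swap p₁ p₂ * swap p₃ p₄ ∈ G) :
    IsPreprimitive G β := by
  set τ := swap i p₁ * swap p₂ p₃
  set τ' := swap p₁ p₂ * swap p₃ p₄
  obtain ⟨hτ₄, hτi, hτ₁, hτ₂, hτ₃⟩ :
      τ p₄ = p₄ ∧ τ i = p₁ ∧ τ p₁ = i ∧ τ p₂ = p₃ ∧ τ p₃ = p₂ := by
    simp [τ, swap_apply_of_ne_of_ne, *, Ne.symm]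
  obtain ⟨hτ'i, hτ'₁, hτ'₂, hτ'₃, hτ'₄⟩ :
      τ' i = i ∧ τ' p₁ = p₂ ∧ τ' p₂ = p₁ ∧ τ' p₃ = p₄ ∧ τ' p₄ = p₃ := by
    simp [τ', swap_apply_of_ne_of_ne, *, Ne.symm]
  refine .of_isTrivialBlock_of_notMem_fixedPoints (a := p₄)
    (fun h => h₃₄ (hτ'₄ ▸ h ⟨τ', hτ'⟩)) fun B h₄ hB => or_iff_not_imp_left.mpr fun hB₁ => ?_
  obtain ⟨x, hx, hx₄⟩ : ∃ x ∈ B, x ≠ p₄ := by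
    by_contra! h
    exact hB₁ (Set.subsingleton_of_forall_eq p₄ h)
  have hτB : ∀ {x}, x ∈ B → τ x ∈ B := hB.apply_mem_of_apply_mem hτ h₄ (by rwa [hτ₄])
  suffices hiB : i ∈ B by
    have hSB : ∀ y ∈ S, y ∈ B := fun y hy => by
      obtain ⟨g, hg, hg₄, rfl⟩ := htrans i hiS y hy
      exact hB.apply_mem_of_apply_mem hg h₄ (by rwa [hg₄]) hiB
    have hτ'B : ∀ {x}, x ∈ B → τ' x ∈ B := hB.apply_mem_of_apply_mem hτ' hiB (by rwa [hτ'i])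
    have h₁ : p₁ ∈ B := hτi ▸ hτB hiB
    refine Set.eq_univ_of_forall fun y => ?_
    rcases hcover y with hy | rfl | rfl | rfl | rfl
    exacts [hSB y hy, h₁, hτ'₁ ▸ hτ'B h₁, hτ'₄ ▸ hτ'B h₄, h₄]
  have hp₁ : p₁ ∈ B → i ∈ B := fun h => hτ₁ ▸ hτB h
  have hp₃ : p₃ ∈ B → i ∈ B := fun h =>
    hp₁ (hτ'₂ ▸ hB.apply_mem_of_apply_mem hτ' h (by rwa [hτ'₃]) (hτ₃ ▸ hτB h))
  rcases hcover x with hxS | rfl | rfl | rfl | rfl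
  · obtain ⟨g, hg, hg₄, hgx⟩ := htrans x hxS i hiS
    exact hgx ▸ hB.apply_mem_of_apply_mem hg h₄ (by rwa [hg₄]) hx
  exacts [hp₁ hx, hp₃ (hτ₂ ▸ hτB hx), hp₃ hx, absurd rfl hx₄]

theorem eq_top_of_alternatingGroup_le [Fintype β] {G : Subgroup (Perm β)}
    (hA : alternatingGroup β ≤ G) {g : Perm β} (hg : g ∈ G) (hsg : sign g = -1) : G = ⊤ := by
  refine eq_top_iff.mpr fun σ _ => ?_
  rcases Int.units_eq_one_or (sign σ) with h | h
  · exact hA (mem_alternatingGroup.mpr h)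
  · have : σ * g⁻¹ ∈ alternatingGroup β := by simp [mem_alternatingGroup, h, hsg]
    simpa using mul_mem (hA this) hg

end

/-- Extending a transitive group on `n ≥ 5` points by the two permutations
`(i, n+1)(n+2, n+3)` and `(n+1, n+2)(n+3, n+4)` yields `S_{n+4}` if the
resulting group contains an odd permutation, and `A_{n+4}` otherwise. -/
theorem extended_group_is_sym_or_alt
    {n d : ℕ} (hn : 5 ≤ n) (α : Fin d → Equiv.Perm (Fin (n + 4)))
    (hfix : ∀ j : Fin d, ∀ x : Fin (n + 4), n ≤ (x : ℕ) → α j x = x)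
    (htrans : ∀ a b : Fin (n + 4), (a : ℕ) < n → (b : ℕ) < n →
      ∃ g ∈ Subgroup.closure (Set.range α), g a = b)
    (i : Fin (n + 4)) (hi : (i : ℕ) < n) :
    let p1 : Fin (n + 4) := ⟨n, by omega⟩
    let p2 : Fin (n + 4) := ⟨n + 1, by omega⟩
    let p3 : Fin (n + 4) := ⟨n + 2, by omega⟩
    let p4 : Fin (n + 4) := ⟨n + 3, by omega⟩
    let αd : Equiv.Perm (Fin (n + 4)) := Equiv.swap i p1 * Equiv.swap p2 p3
    let αd1 : Equiv.Perm (Fin (n + 4)) := Equiv.swap p1 p2 * Equiv.swap p3 p4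
    let Γstar : Subgroup (Equiv.Perm (Fin (n + 4))) :=
      Subgroup.closure (Set.range α ∪ {αd, αd1})
    ((∃ g ∈ Γstar, Equiv.Perm.sign g = -1) → Γstar = ⊤) ∧
    ((∀ g ∈ Γstar, Equiv.Perm.sign g = 1) → Γstar = alternatingGroup (Fin (n + 4))) := by
  intro p1 p2 p3 p4 αd αd1 Γstar
  obtain ⟨hi₁, hi₂, hi₃, hi₄, h₁₂, h₁₃, h₁₄, h₂₃, h₂₄, h₃₄⟩ : i ≠ p1 ∧ i ≠ p2 ∧ i ≠ p3 ∧ i ≠ p4 ∧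
      p1 ≠ p2 ∧ p1 ≠ p3 ∧ p1 ≠ p4 ∧ p2 ≠ p3 ∧ p2 ≠ p4 ∧ p3 ≠ p4 := by
    simp only [p1, p2, p3, p4, ne_eq, Fin.ext_iff]
    omega
  have hΓ : Subgroup.closure (Set.range α) ≤ Γstar := Subgroup.closure_mono Set.subset_union_left
  have hαd : αd ∈ Γstar := Subgroup.subset_closure (by simp)
  have hαd1 : αd1 ∈ Γstar := Subgroup.subset_closure (by simp)
  have hΓfix : ∀ g ∈ Subgroup.closure (Set.range α), ∀ x : Fin (n + 4), n ≤ (x : ℕ) → g x = x :=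
    fun g hg x hx => (Subgroup.closure_le (stabilizer _ x)).mpr
      (by rintro _ ⟨j, rfl⟩; exact hfix j x hx) hg
  obtain ⟨j, hj, hji⟩ : ∃ j : Fin (n + 4), (j : ℕ) < n ∧ j ≠ i := by
    by_cases h : (i : ℕ) = 0
    · exact ⟨⟨1, by omega⟩, (by omega : 1 < n), Fin.ne_of_val_ne (by omega : 1 ≠ (i : ℕ))⟩
    · exact ⟨⟨0, by omega⟩, (by omega : 0 < n), Fin.ne_of_val_ne (by omega : 0 ≠ (i : ℕ))⟩
  obtain ⟨g, hg, rfl⟩ := htrans i j hi hj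
  have hcycle := isThreeCycle_swap_mul_swap_mul_conj hi₁ hi₂.symm h₁₂.symm hi₃.symm h₁₃.symm hji
    (hΓfix g hg p1 le_rfl) (hΓfix g hg p2 (by simp [p2])) (hΓfix g hg p3 (by simp [p3]))
  have hprim : IsPreprimitive Γstar (Fin (n + 4)) :=
    isPreprimitive_of_swap_mul_swap_mem (S := {x | (x : ℕ) < n}) hi₁ hi₂ hi₃ hi₄ h₁₂ h₁₃ h₁₄
      h₂₃ h₂₄ h₃₄ hi (fun x => by simp only [p1, p2, p3, p4, Set.mem_ofPred_eq, Fin.ext_iff]; omega)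
      (fun x hx y hy => (htrans x y hx hy).imp fun g ⟨hg, hgy⟩ =>
        ⟨hΓ hg, hΓfix g hg p4 (by simp [p4]), hgy⟩) hαd hαd1
  have hA := alternatingGroup_le_of_isPreprimitive_of_isThreeCycle_mem hprim hcycle
    (mul_mem hαd (mul_mem (mul_mem (hΓ hg) hαd) (inv_mem (hΓ hg))))
  exact ⟨fun ⟨g, hg, hsg⟩ => eq_top_of_alternatingGroup_le hA hg hsg,
    fun h => le_antisymm (fun g hg => mem_alternatingGroup.mpr (h g hg)) hA⟩
end

section
/- With the notation of the sesqui-extension: if τ ∉ Φ*, then Φ is a string C-group (with generators α₀,…,α_{d−1}) if and only if Φ* is a string C-group (with generators α_i τ^{η_i}). -/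
/-- `β : Fin d → G` is a family of string C-group generators: nontrivial
involutions satisfying the string property and the intersection property. -/
def IsStringCGroupFamily {G : Type*} [Group G] {d : ℕ} (β : Fin d → G) : Prop :=
  (∀ i, β i * β i = 1 ∧ β i ≠ 1) ∧
  (∀ i j : Fin d, ((i : ℕ) + 1 < (j : ℕ) ∨ (j : ℕ) + 1 < (i : ℕ)) →
    Commute (β i) (β j)) ∧
  (∀ I J : Set (Fin d),
    Subgroup.closure (β '' I) ⊓ Subgroup.closure (β '' J) =
      Subgroup.closure (β '' (I ∩ J)))

/-!
If `τ` is an involution commuting with `Φ`, then adjoining `τ` to `Φ_I = ⟨α_i | i ∈ I⟩` and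
to `Φ*_I = ⟨α_i τ^{η_i} | i ∈ I⟩` gives the same group `Φ_I × ⟨τ⟩`. Since `τ ∉ Φ`,
intersecting `Φ_I × ⟨τ⟩` and `Φ_J × ⟨τ⟩` gives `(Φ_I ∩ Φ_J) × ⟨τ⟩`, and since `τ ∉ Φ*`, the
subgroup `Φ*_I` is recovered from `Φ*_I × ⟨τ⟩` by intersecting with `Φ*`. So the intersection
property passes from `Φ` to `Φ*`; the other axioms are immediate. The situation is symmetric
in `Φ` and `Φ*`.
-/

open Set

namespace Subgroup

variable {G : Type*} [Group G] {τ x : G} {A B K : Subgroup G}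

lemma eq_one_or_eq_of_mem_zpowers_of_mul_self_eq_one (hτ : τ * τ = 1) (hx : x ∈ zpowers τ) :
    x = 1 ∨ x = τ := by
  obtain ⟨k, rfl⟩ := mem_zpowers_iff.1 hx
  have hτ2 : τ ^ (2 : ℤ) = 1 := by rw [zpow_two, hτ]
  obtain ⟨m, rfl | rfl⟩ := Int.even_or_odd' k
  · simp [zpow_mul, hτ2]
  · simp [zpow_add_one, zpow_mul, hτ2]

lemma mem_sup_zpowers_iff (hτ : τ * τ = 1) (hA : τ ∈ centralizer (A : Set G)) :
    x ∈ A ⊔ zpowers τ ↔ x ∈ A ∨ x * τ ∈ A := by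
  have hAN : A ≤ normalizer (zpowers τ : Set G) :=
    (le_centralizer_iff.2 (zpowers_le.2 hA)).trans (centralizer_le_normalizer _)
  rw [← SetLike.mem_coe, coe_mul_of_left_le_normalizer_right A _ hAN, Set.mem_mul]
  constructor
  · rintro ⟨a, ha, z, hz, rfl⟩
    rcases eq_one_or_eq_of_mem_zpowers_of_mul_self_eq_one hτ hz with rfl | rfl
    · exact Or.inl (by simpa using ha)
    · right
      rwa [mul_assoc, hτ, mul_one]
  · rintro (hx | hx)
    · exact ⟨x, hx, 1, one_mem _, mul_one x⟩
    · exact ⟨x * τ, hx, τ, mem_zpowers τ, by rw [mul_assoc, hτ, mul_one]⟩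

lemma sup_zpowers_inf_sup_zpowers_le (hτ : τ * τ = 1) (hA : τ ∈ centralizer (A : Set G))
    (hB : τ ∈ centralizer (B : Set G)) (hτAB : τ ∉ A ⊔ B) :
    (A ⊔ zpowers τ) ⊓ (B ⊔ zpowers τ) ≤ A ⊓ B ⊔ zpowers τ := by
  intro x hx
  obtain ⟨hxA, hxB⟩ := mem_inf.1 hx
  have hτ' {y : G} (hy : y ∈ A ⊔ B) (hyτ : y * τ ∈ A ⊔ B) : False :=
    hτAB ((mul_mem_cancel_left hy).1 hyτ)
  rw [mem_sup_zpowers_iff hτ hA] at hxA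
  rw [mem_sup_zpowers_iff hτ hB] at hxB
  rw [mem_sup_zpowers_iff hτ (centralizer_le inf_le_left hA)]
  rcases hxA with hxA | hxA <;> rcases hxB with hxB | hxB
  · exact Or.inl ⟨hxA, hxB⟩
  · exact (hτ' (mem_sup_left hxA) (mem_sup_right hxB)).elim
  · exact (hτ' (mem_sup_right hxB) (mem_sup_left hxA)).elim
  · exact Or.inr ⟨hxA, hxB⟩

lemma sup_zpowers_inf_eq (hτ : τ * τ = 1) (hA : τ ∈ centralizer (A : Set G)) (hAK : A ≤ K)
    (hτK : τ ∉ K) : (A ⊔ zpowers τ) ⊓ K = A := by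
  refine le_antisymm (fun x hx => ?_) (le_inf le_sup_left hAK)
  obtain ⟨hx, hxK⟩ := mem_inf.1 hx
  exact ((mem_sup_zpowers_iff hτ hA).1 hx).resolve_right
    fun hxτ => hτK ((mul_mem_cancel_left hxK).1 (hAK hxτ))

lemma mem_centralizer_closure_image {ι : Type*} {α : ι → G} (hτα : ∀ i, Commute τ (α i))
    (s : Set ι) : τ ∈ centralizer (closure (α '' s) : Set G) := by
  rw [centralizer_closure, mem_centralizer_iff]
  rintro _ ⟨i, -, rfl⟩
  exact (hτα i).eq.symm

end Subgroup

open Subgroup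

section SesquiExtension

variable {G : Type*} [Group G] {ι : Type*} {τ : G} {α β : ι → G}

/-- Unlike in `Φ*`, where only `α_k` is multiplied by `τ`, any set of indices may carry `τ`. -/
def IsSesquiExtension (τ : G) (α β : ι → G) : Prop :=
  ∀ i, β i = α i ∨ β i = α i * τ

namespace IsSesquiExtension

lemma symm (h : IsSesquiExtension τ α β) (hτ : τ * τ = 1) : IsSesquiExtension τ β α :=
  fun i => (h i).imp Eq.symm fun hi => by rw [hi, mul_assoc, hτ, mul_one]

lemma commute (h : IsSesquiExtension τ α β) (hτα : ∀ i, Commute τ (α i)) (i : ι) :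
    Commute τ (β i) := by
  rcases h i with hi | hi <;> rw [hi]
  exacts [hτα i, (hτα i).mul_right (Commute.refl τ)]

lemma commute_of_commute (h : IsSesquiExtension τ α β) (hτα : ∀ i, Commute τ (α i))
    {i j : ι} (hij : Commute (α i) (α j)) : Commute (β i) (β j) := by
  rcases h i with hi | hi <;> rcases h j with hj | hj <;> rw [hi, hj]
  · exact hij
  · exact hij.mul_right (hτα i).symm
  · exact hij.mul_left (hτα j)
  · exact (hij.mul_right (hτα i).symm).mul_left ((hτα j).mul_right (Commute.refl τ))

lemma closure_image_le (h : IsSesquiExtension τ α β) (s : Set ι) :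
    closure (β '' s) ≤ closure (α '' s) ⊔ zpowers τ := by
  rw [closure_le]
  rintro _ ⟨i, hi, rfl⟩
  have hαi : α i ∈ closure (α '' s) ⊔ zpowers τ :=
    mem_sup_left (subset_closure (mem_image_of_mem α hi))
  rcases h i with hi | hi <;> rw [hi]
  exacts [hαi, mul_mem hαi (mem_sup_right (mem_zpowers τ))]

lemma closure_image_sup_zpowers (h : IsSesquiExtension τ α β) (hτ : τ * τ = 1) (s : Set ι) :
    closure (β '' s) ⊔ zpowers τ = closure (α '' s) ⊔ zpowers τ :=
  le_antisymm (sup_le (h.closure_image_le s) le_sup_right)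
    (sup_le ((h.symm hτ).closure_image_le s) le_sup_right)

end IsSesquiExtension

theorem IsStringCGroupFamily.of_isSesquiExtension {d : ℕ} {α β : Fin d → G}
    (hα : IsStringCGroupFamily α) (hβ : IsSesquiExtension τ α β) (hτ : τ * τ = 1)
    (hτα : ∀ i, Commute τ (α i)) (hτΦ : τ ∉ closure (range α))
    (hτΦ' : τ ∉ closure (range β)) : IsStringCGroupFamily β := by
  obtain ⟨hinv, hstring, hinter⟩ := hα
  refine ⟨fun i => ?_, fun i j hij => hβ.commute_of_commute hτα (hstring i j hij),
    fun I J => le_antisymm ?_ ?_⟩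
  · rcases hβ i with hi | hi <;> rw [hi]
    · exact hinv i
    refine ⟨by rw [(hτα i).mul_mul_mul_comm, (hinv i).1, hτ, mul_one], fun h1 => hτΦ ?_⟩
    rw [← mul_eq_one_iff_inv_eq.1 h1]
    exact inv_mem (subset_closure (mem_range_self i))
  · have hτΦIJ : τ ∉ closure (α '' I) ⊔ closure (α '' J) := fun h =>
      hτΦ (sup_le (closure_mono (image_subset_range α I))
        (closure_mono (image_subset_range α J)) h)
    calc closure (β '' I) ⊓ closure (β '' J)
        ≤ (closure (β '' I) ⊔ zpowers τ) ⊓ (closure (β '' J) ⊔ zpowers τ) ⊓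
            closure (range β) :=
          le_inf (inf_le_inf le_sup_left le_sup_left)
            (inf_le_left.trans (closure_mono (image_subset_range β I)))
      _ = (closure (α '' I) ⊔ zpowers τ) ⊓ (closure (α '' J) ⊔ zpowers τ) ⊓
            closure (range β) := by
          rw [hβ.closure_image_sup_zpowers hτ, hβ.closure_image_sup_zpowers hτ]
      _ ≤ (closure (α '' I) ⊓ closure (α '' J) ⊔ zpowers τ) ⊓ closure (range β) :=
          inf_le_inf_right _ (sup_zpowers_inf_sup_zpowers_le hτ
            (mem_centralizer_closure_image hτα I) (mem_centralizer_closure_image hτα J) hτΦIJ)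
      _ = (closure (β '' (I ∩ J)) ⊔ zpowers τ) ⊓ closure (range β) := by
          rw [hinter, hβ.closure_image_sup_zpowers hτ]
      _ = closure (β '' (I ∩ J)) :=
          sup_zpowers_inf_eq hτ (mem_centralizer_closure_image (hβ.commute hτα) _)
            (closure_mono (image_subset_range β _)) hτΦ'
  · exact le_inf (closure_mono (image_mono inter_subset_left))
      (closure_mono (image_mono inter_subset_right))

end SesquiExtension

theorem sesqui_extension_stringCGroup_iff_general
    {G : Type*} [Group G] {d : ℕ} (α : Fin d → G) (k : Fin d) (τ : G)
    (hτ2 : τ * τ = 1)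
    (hτΦ : τ ∉ Subgroup.closure (Set.range α))
    (hcomm : ∀ g ∈ Subgroup.closure (Set.range α), Commute τ g)
    (hτΦstar : τ ∉ Subgroup.closure
      (Set.range fun i => α i * τ ^ (if i = k then 1 else 0))) :
    IsStringCGroupFamily α ↔
      IsStringCGroupFamily (fun i => α i * τ ^ (if i = k then 1 else 0)) := by
  have hβ : IsSesquiExtension τ α (fun i => α i * τ ^ (if i = k then 1 else 0)) := fun i => by
    by_cases hik : i = k <;> simp [hik]
  have hτα : ∀ i, Commute τ (α i) := fun i => hcomm _ (subset_closure (mem_range_self i))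
  exact ⟨fun h => h.of_isSesquiExtension hβ hτ2 hτα hτΦ hτΦstar,
    fun h => h.of_isSesquiExtension (hβ.symm hτ2) hτ2 (hβ.commute hτα) hτΦstar hτΦ⟩

/-- If `τ` does not belong to the sesqui-extension `Φ*`, then `Φ` is a string
C-group if and only if `Φ*` is. -/
theorem sesqui_extension_stringCGroup_iff
    {G : Type*} [Group G] {d : ℕ} (α : Fin d → G) (k : Fin d) (τ : G)
    (hτ2 : τ * τ = 1) (hτ1 : τ ≠ 1)
    (hτΦ : τ ∉ Subgroup.closure (Set.range α))
    (hcomm : ∀ g ∈ Subgroup.closure (Set.range α), Commute τ g)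
    (hτΦstar : τ ∉ Subgroup.closure
      (Set.range fun i => α i * τ ^ (if i = k then 1 else 0))) :
    IsStringCGroupFamily α ↔
      IsStringCGroupFamily (fun i => α i * τ ^ (if i = k then 1 else 0)) :=
  sesqui_extension_stringCGroup_iff_general α k τ hτ2 hτΦ hcomm hτΦstar
end

section
/- Let Γ = ⟨ρ₀,…,ρ_{r−1}⟩ ≅ A_n with n ≥ 12 be a string C-group with each Γ_i intransitive, and suppose for some index i the permutation ρ_i interchanges exactly one pair {a,b} of points lying in different Γ_i-orbits. If A denotes the permutation group induced by Γ_i on the orbit of a, and A is primitive on that orbit, then the set J_A = { j : the action of ρ_j on the orbit of a is nontrivial } is an interval of consecutive integers. -/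
/-!
Suppose `j₁ < j₂ < j₃`, where `ρ j₁` and `ρ j₃` move points of the `Γᵢ`-orbit `O` of `a` but
`ρ j₂` fixes `O` pointwise; by symmetry say `j₂ < i`. The subgroup `H` generated by the `ρ j`
with `j < j₂` is normalized by every generator of `Γᵢ` except `ρ j₂`, which acts trivially on `O`,
so the `H`-orbits in `O` are blocks of `Γᵢ`. By the string property `H` commutes with `ρ i`, and
since `{a, b}` is the only pair swapped by `ρ i` across the two orbits, `H` fixes `a`. Primitivity
then forces every `H`-orbit in `O` to be a point, contradicting that `ρ j₁ ∈ H` moves a point of `O`.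
-/

open scoped Pointwise

namespace MulAction

variable {G X : Type*} [Group G] [MulAction G X]

lemma mem_orbit_subgroup_iff {H : Subgroup G} {x y : X} :
    y ∈ orbit H x ↔ ∃ g ∈ H, g • x = y := by
  simp [mem_orbit_iff, Subgroup.smul_def]

lemma notMem_orbit_subgroup_iff {H : Subgroup G} {x y : X} :
    y ∉ orbit H x ↔ ∀ g ∈ H, g • x ≠ y := by
  simp [mem_orbit_subgroup_iff]

lemma smul_mem_orbit_subgroup {H : Subgroup G} {g : G} (hg : g ∈ H) {x y : X}
    (hy : y ∈ orbit H x) : g • y ∈ orbit H x :=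
  mem_orbit_subgroup_iff.mpr <| by
    obtain ⟨h, hh, rfl⟩ := mem_orbit_subgroup_iff.mp hy
    exact ⟨g * h, mul_mem hg hh, mul_smul g h x⟩

lemma orbit_subgroup_subset_of_le {H N : Subgroup G} (hHN : H ≤ N) {a x : X}
    (hx : x ∈ orbit N a) : orbit H x ⊆ orbit N a := by
  intro y hy
  obtain ⟨h, hh, rfl⟩ := mem_orbit_subgroup_iff.mp hy
  exact smul_mem_orbit_subgroup (hHN hh) hx

lemma smul_orbit_eq_orbit_smul_of_mem_normalizer {H : Subgroup G} {g : G}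
    (hg : g ∈ Subgroup.normalizer (H : Set G)) (x : X) : g • orbit H x = orbit H (g • x) := by
  ext y
  simp only [Set.mem_smul_set, mem_orbit_subgroup_iff]
  constructor
  · rintro ⟨_, ⟨h, hh, rfl⟩, rfl⟩
    exact ⟨g * h * g⁻¹, (Subgroup.mem_normalizer_iff.mp hg h).mp hh, by simp [mul_smul]⟩
  · rintro ⟨h, hh, rfl⟩
    exact ⟨_, ⟨g⁻¹ * h * g, (Subgroup.mem_normalizer_iff''.mp hg h).mp hh, rfl⟩,
      by simp [mul_smul]⟩

lemma smul_orbit_eq_orbit_smul_of_mem_closure {s : Set G} {H : Subgroup G} {a : X}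
    (hH : H ≤ Subgroup.closure s)
    (hs : ∀ t ∈ s,
      t ∈ Subgroup.normalizer (H : Set G) ∨ ∀ x ∈ orbit (Subgroup.closure s) a, t • x = x)
    {g : G} (hg : g ∈ Subgroup.closure s) :
    ∀ x ∈ orbit (Subgroup.closure s) a, g • orbit H x = orbit H (g • x) := by
  induction hg using Subgroup.closure_induction with
  | mem t ht =>
    intro x hx
    rcases hs t ht with hnorm | hfix
    · exact smul_orbit_eq_orbit_smul_of_mem_normalizer hnorm x
    · rw [hfix x hx, ← Set.image_smul,
        Set.image_congr fun y hy => hfix y (orbit_subgroup_subset_of_le hH hx hy),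
        Set.image_id']
  | one => simp
  | mul g₁ g₂ hg₁ hg₂ ih₁ ih₂ =>
    intro x hx
    rw [mul_smul, ih₂ x hx, ih₁ _ (smul_mem_orbit_subgroup hg₂ hx), mul_smul]
  | inv g hg ih =>
    intro x hx
    have hx' : g⁻¹ • x ∈ orbit (Subgroup.closure s) a := smul_mem_orbit_subgroup (inv_mem hg) hx
    rw [inv_smul_eq_iff, ih _ hx', smul_inv_smul]

lemma smul_eq_self_of_commute {N : Subgroup G} {σ : G} {a b : X} (hab : σ • a = b)
    (hb : b ∉ orbit N a)
    (huniq : ∀ x y : X, σ • x = y → x ≠ y → y ∉ orbit N x → s(x, y) = s(a, b))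
    {h : G} (hN : h ∈ N) (hσ : Commute σ h) : h • a = a := by
  have hha : h • a ∈ orbit N a := smul_mem_orbit_subgroup hN (mem_orbit_self a)
  have hhb : h • b ∉ orbit N a := fun hmem =>
    hb (by simpa using smul_mem_orbit_subgroup (inv_mem hN) hmem)
  have hσh : σ • h • a = h • b := by rw [← mul_smul, hσ.eq, mul_smul, hab]
  have hne : h • a ≠ h • b := fun he => hhb (he ▸ hha)
  rw [← orbit_eq_iff.mpr hha] at hhb
  rcases Sym2.eq_iff.mp (huniq _ _ hσh hne hhb) with ⟨he, -⟩ | ⟨he, -⟩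
  · exact he
  · exact absurd (he ▸ hha) hb

end MulAction

open MulAction

variable {G X ι : Type*} [Group G] [MulAction G X]

theorem smul_eq_self_of_separated {ρ : ι → G} {i j₀ : ι} {a b : X} {S : Set ι}
    (hab : ρ i • a = b) (hb : b ∉ orbit (Subgroup.closure (ρ '' {j | j ≠ i})) a)
    (huniq : ∀ x y : X, ρ i • x = y → x ≠ y →
      y ∉ orbit (Subgroup.closure (ρ '' {j | j ≠ i})) x → s(x, y) = s(a, b))
    (hprim : ∀ B ⊆ orbit (Subgroup.closure (ρ '' {j | j ≠ i})) a,
      (∀ g ∈ Subgroup.closure (ρ '' {j | j ≠ i}), g • B = B ∨ Disjoint (g • B) B) →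
      B.Subsingleton ∨ B = orbit (Subgroup.closure (ρ '' {j | j ≠ i})) a)
    (hiS : i ∉ S) (hij₀ : i ≠ j₀)
    (hcomm : ∀ k ∉ S, k ≠ j₀ → ∀ j ∈ S, Commute (ρ k) (ρ j))
    (hfix : ∀ x ∈ orbit (Subgroup.closure (ρ '' {j | j ≠ i})) a, ρ j₀ • x = x) :
    ∀ j ∈ S, ∀ x ∈ orbit (Subgroup.closure (ρ '' {j | j ≠ i})) a, ρ j • x = x := by
  intro j hj x hx
  set N := Subgroup.closure (ρ '' {j | j ≠ i})
  set H := Subgroup.closure (ρ '' S)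
  have hHN : H ≤ N := Subgroup.closure_mono <| Set.image_mono fun j hj (he : j = i) =>
    hiS (he ▸ hj)
  have hcent : ∀ k ∉ S, k ≠ j₀ → ρ k ∈ Subgroup.centralizer (H : Set G) := by
    intro k hkS hkj₀
    rw [Subgroup.centralizer_closure, Subgroup.mem_centralizer_iff]
    rintro _ ⟨j, hj, rfl⟩
    exact (hcomm k hkS hkj₀ j hj).eq.symm
  have hH_fix : ∀ h ∈ H, h • a = a := fun h hh => smul_eq_self_of_commute hab hb huniq (hHN hh)
    (Subgroup.mem_centralizer_iff.mp (hcent i hiS hij₀) h hh).symm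
  have hgen : ∀ t ∈ ρ '' {j | j ≠ i},
      t ∈ Subgroup.normalizer (H : Set G) ∨ ∀ x ∈ orbit N a, t • x = x := by
    rintro _ ⟨k, hki, rfl⟩
    by_cases hkS : k ∈ S
    · exact .inl (H.le_normalizer (Subgroup.subset_closure ⟨k, hkS, rfl⟩))
    by_cases hkj₀ : k = j₀
    · exact .inr (hkj₀ ▸ hfix)
    · exact .inl (Subgroup.centralizer_le_normalizer _ (hcent k hkS hkj₀))
  have hblock : ∀ g ∈ N, g • orbit H x = orbit H x ∨ Disjoint (g • orbit H x) (orbit H x) := by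
    intro g hg
    rw [smul_orbit_eq_orbit_smul_of_mem_closure hHN hgen hg x hx]
    exact orbit.eq_or_disjoint _ _
  have hsubsingleton : (orbit H x).Subsingleton := by
    rcases hprim _ (orbit_subgroup_subset_of_le hHN hx) hblock with hsing | heq
    · exact hsing
    · rw [← orbit_eq_iff.mpr (heq ▸ mem_orbit_self a : a ∈ orbit H x)]
      rintro _ hy _ hz
      obtain ⟨h, hh, rfl⟩ := mem_orbit_subgroup_iff.mp hy
      obtain ⟨h', hh', rfl⟩ := mem_orbit_subgroup_iff.mp hz
      rw [hH_fix h hh, hH_fix h' hh']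
  have hρj : ρ j ∈ H := Subgroup.subset_closure ⟨j, hj, rfl⟩
  exact hsubsingleton (smul_mem_orbit_subgroup hρj (mem_orbit_self x)) (mem_orbit_self x)

theorem JA_is_interval_of_primitive_general
    {n : ℕ} {r : ℕ} (ρ : Fin r → Equiv.Perm (Fin n))
    (hstring : ∀ i j : Fin r, ((i : ℕ) + 1 < (j : ℕ) ∨ (j : ℕ) + 1 < (i : ℕ)) →
      Commute (ρ i) (ρ j))
    (i : Fin r) (a b : Fin n) (hab : ρ i a = b)
    (horb : ∀ g ∈ Subgroup.closure (ρ '' {j | j ≠ i}), g a ≠ b)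
    (huniq : ∀ x y : Fin n, ρ i x = y → x ≠ y →
      (∀ g ∈ Subgroup.closure (ρ '' {j | j ≠ i}), g x ≠ y) → s(x, y) = s(a, b))
    (hprim : ∀ B : Set (Fin n),
      B ⊆ {x | ∃ g ∈ Subgroup.closure (ρ '' {j | j ≠ i}), g a = x} →
      (∀ g ∈ Subgroup.closure (ρ '' {j | j ≠ i}),
        (fun x => g x) '' B = B ∨ Disjoint ((fun x => g x) '' B) B) →
      B.Subsingleton ∨ B = {x | ∃ g ∈ Subgroup.closure (ρ '' {j | j ≠ i}), g a = x}) :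
    ∀ j₁ j₂ j₃ : Fin r,
      (∃ x ∈ {x | ∃ g ∈ Subgroup.closure (ρ '' {j | j ≠ i}), g a = x}, ρ j₁ x ≠ x) →
      (∃ x ∈ {x | ∃ g ∈ Subgroup.closure (ρ '' {j | j ≠ i}), g a = x}, ρ j₃ x ≠ x) →
      j₁ ≤ j₂ → j₂ ≤ j₃ →
      (∃ x ∈ {x | ∃ g ∈ Subgroup.closure (ρ '' {j | j ≠ i}), g a = x}, ρ j₂ x ≠ x) := by
  intro j₁ j₂ j₃ ⟨x₁, hx₁, h₁⟩ ⟨x₃, hx₃, h₃⟩ h₁₂ h₂₃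
  set N := Subgroup.closure (ρ '' {j | j ≠ i})
  have hO : {x | ∃ g ∈ N, g a = x} = orbit N a := Set.ext fun _ => mem_orbit_subgroup_iff.symm
  simp only [hO] at hx₁ hx₃ hprim ⊢
  have hb : b ∉ orbit N a := notMem_orbit_subgroup_iff.mpr horb
  have huniq' : ∀ x y, ρ i • x = y → x ≠ y → y ∉ orbit N x → s(x, y) = s(a, b) :=
    fun x y hxy hne hy => huniq x y hxy hne (notMem_orbit_subgroup_iff.mp hy)
  by_contra! hfix
  have hij₂ : i ≠ j₂ := by
    rintro rfl
    exact horb 1 (one_mem N) ((hfix a (mem_orbit_self a)).symm.trans hab)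
  rcases lt_or_gt_of_ne hij₂ with hlt | hgt
  · have hne : j₃ ≠ j₂ := fun he => h₃ (he ▸ hfix x₃ hx₃)
    refine h₃ (smul_eq_self_of_separated (S := {j | j₂ < j}) hab hb huniq' hprim
      (by simpa using hlt.le) hij₂ ?_ hfix j₃ (lt_of_le_of_ne h₂₃ hne.symm) x₃ hx₃)
    intro k (hk : ¬ j₂ < k) hkj₂ j (hj : j₂ < j)
    exact hstring k j (.inl (by omega))
  · have hne : j₁ ≠ j₂ := fun he => h₁ (he ▸ hfix x₁ hx₁)
    refine h₁ (smul_eq_self_of_separated (S := {j | j < j₂}) hab hb huniq' hprim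
      (by simpa using hgt.le) hij₂ ?_ hfix j₁ (lt_of_le_of_ne h₁₂ hne) x₁ hx₁)
    intro k (hk : ¬ k < j₂) hkj₂ j (hj : j < j₂)
    exact hstring k j (.inr (by omega))

/-- If `Γ ≅ Aₙ` (`n ≥ 12`) is a string C-group with all `Γⱼ` intransitive,
`ρᵢ` swaps exactly one pair `{a,b}` across the two `Γᵢ`-orbits, and the group
induced on the orbit of `a` is primitive, then the set of indices `j` whose
generator acts nontrivially on that orbit is an interval. -/
theorem JA_is_interval_of_primitive
    {n : ℕ} (hn : 12 ≤ n) {r : ℕ} (ρ : Fin r → Equiv.Perm (Fin n))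
    (hinv : ∀ i, ρ i * ρ i = 1) (hne : ∀ i, ρ i ≠ 1)
    (hstring : ∀ i j : Fin r, ((i : ℕ) + 1 < (j : ℕ) ∨ (j : ℕ) + 1 < (i : ℕ)) →
      Commute (ρ i) (ρ j))
    (hint : ∀ I J : Set (Fin r),
      Subgroup.closure (ρ '' I) ⊓ Subgroup.closure (ρ '' J) =
        Subgroup.closure (ρ '' (I ∩ J)))
    (hgen : Subgroup.closure (Set.range ρ) = alternatingGroup (Fin n))
    (hintrans : ∀ j : Fin r,
      ¬ ∀ a b : Fin n, ∃ g ∈ Subgroup.closure (ρ '' {l | l ≠ j}), g a = b)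
    (i : Fin r) (a b : Fin n) (hab : ρ i a = b) (hab' : a ≠ b)
    (horb : ∀ g ∈ Subgroup.closure (ρ '' {j | j ≠ i}), g a ≠ b)
    (huniq : ∀ x y : Fin n, ρ i x = y → x ≠ y →
      (∀ g ∈ Subgroup.closure (ρ '' {j | j ≠ i}), g x ≠ y) → s(x, y) = s(a, b))
    (hprim : ∀ B : Set (Fin n),
      B ⊆ {x | ∃ g ∈ Subgroup.closure (ρ '' {j | j ≠ i}), g a = x} →
      (∀ g ∈ Subgroup.closure (ρ '' {j | j ≠ i}),
        (fun x => g x) '' B = B ∨ Disjoint ((fun x => g x) '' B) B) →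
      B.Subsingleton ∨ B = {x | ∃ g ∈ Subgroup.closure (ρ '' {j | j ≠ i}), g a = x}) :
    ∀ j₁ j₂ j₃ : Fin r,
      (∃ x ∈ {x | ∃ g ∈ Subgroup.closure (ρ '' {j | j ≠ i}), g a = x}, ρ j₁ x ≠ x) →
      (∃ x ∈ {x | ∃ g ∈ Subgroup.closure (ρ '' {j | j ≠ i}), g a = x}, ρ j₃ x ≠ x) →
      j₁ ≤ j₂ → j₂ ≤ j₃ →
      (∃ x ∈ {x | ∃ g ∈ Subgroup.closure (ρ '' {j | j ≠ i}), g a = x}, ρ j₂ x ≠ x) :=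
  JA_is_interval_of_primitive_general ρ hstring i a b hab horb huniq hprim
end

section
/- Let Φ = ⟨α₀,…,α_{d−1}⟩ be a string group generated by involutions, acting transitively and imprimitively on a set of size ab, so that Φ embeds into S_a ≀ S_b with a,b ≥ 2, and suppose every maximal parabolic Φ_j = ⟨α_k : k ≠ j⟩ is intransitive. If X is a subset of the generators that independently generates the induced action on the b blocks, then d ≤ |X| + a − 1; consequently d ≤ a + b − 2. -/
open Subgroup

section Aux

variable {β : Type*}

/-- Orbit equivalence relation of a subgroup of permutations. -/
def permOrbSetoid (H : Subgroup (Equiv.Perm β)) : Setoid β where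
  r x y := ∃ g ∈ H, g x = y
  iseqv := by
    refine ⟨fun x => ⟨1, H.one_mem, rfl⟩, ?_, ?_⟩
    · rintro x y ⟨g, hg, rfl⟩
      exact ⟨g⁻¹, H.inv_mem hg, by simp⟩
    · rintro x y z ⟨g, hg, rfl⟩ ⟨k, hk, rfl⟩
      exact ⟨k * g, H.mul_mem hk hg, by simp⟩

/-- Number of orbits. -/
noncomputable def orbCount (H : Subgroup (Equiv.Perm β)) : ℕ :=
  Nat.card (Quotient (permOrbSetoid H))

lemma orbCount_lt [Finite β] {H K : Subgroup (Equiv.Perm β)} (hHK : H ≤ K)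
    {x y : β} (hK : ∃ g ∈ K, g x = y) (hH : ¬ ∃ g ∈ H, g x = y) :
    orbCount K < orbCount H := by
  classical
  cases nonempty_fintype β
  let F : Quotient (permOrbSetoid H) → Quotient (permOrbSetoid K) :=
    Quotient.map' id (fun u v huv => by
      obtain ⟨g, hg, hgv⟩ := huv
      exact ⟨g, hHK hg, hgv⟩)
  have hsurj : Function.Surjective F := by
    intro q
    refine Quotient.inductionOn' q fun z => ⟨Quotient.mk'' z, rfl⟩
  have hninj : ¬ Function.Injective F := by
    intro hinj
    have : (Quotient.mk'' x : Quotient (permOrbSetoid H)) = Quotient.mk'' y := by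
      apply hinj
      exact Quotient.sound' hK
    exact hH (Quotient.exact' this)
  have : Nat.card (Quotient (permOrbSetoid K)) < Nat.card (Quotient (permOrbSetoid H)) := by
    rw [Nat.card_eq_fintype_card, Nat.card_eq_fintype_card]
    exact Fintype.card_lt_of_surjective_not_injective F hsurj hninj
  exact this

lemma orbCount_pos [Finite β] [Nonempty β] (H : Subgroup (Equiv.Perm β)) :
    1 ≤ orbCount H := by
  have : Finite (Quotient (permOrbSetoid H)) :=
    Finite.of_surjective (Quotient.mk _) Quotient.mk_surjective
  have : Nonempty (Quotient (permOrbSetoid H)) := ⟨Quotient.mk _ (Classical.arbitrary β)⟩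
  exact Nat.card_pos

lemma orbCount_le_card [Finite β] (H : Subgroup (Equiv.Perm β)) :
    orbCount H ≤ Nat.card β :=
  Nat.card_le_card_of_surjective (Quotient.mk _) Quotient.mk_surjective

/-- If some generator set together with `g j` acts transitively but the closure of
`g '' A` does not, then `g j` moves some point out of its `closure (g '' A)`-orbit. -/
lemma exists_cross {ι : Type*} (g : ι → Equiv.Perm β) (A : Set ι) (j : ι)
    (htr : ∀ x y : β, ∃ p ∈ closure (g '' insert j A), p x = y)
    (hin : ¬ ∀ x y : β, ∃ p ∈ closure (g '' A), p x = y) :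
    ∃ x : β, ¬ ∃ p ∈ closure (g '' A), p x = g j x := by
  by_contra hc
  push_neg at hc
  apply hin
  have key : ∀ p ∈ closure (g '' insert j A), ∀ x : β, ∃ q ∈ closure (g '' A), q x = p x := by
    intro p hp
    induction hp using closure_induction with
    | mem u hu =>
      obtain ⟨k, hk, rfl⟩ := hu
      rcases hk with rfl | hk
      · intro x
        obtain ⟨q, hq, hqx⟩ := hc x
        exact ⟨q, hq, hqx⟩
      · exact fun x => ⟨g k, subset_closure ⟨k, hk, rfl⟩, rfl⟩
    | one => exact fun x => ⟨1, one_mem _, rfl⟩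
    | mul u v hu hv ihu ihv =>
      intro x
      obtain ⟨q₂, hq₂, hq₂x⟩ := ihv x
      obtain ⟨q₁, hq₁, hq₁x⟩ := ihu (v x)
      exact ⟨q₁ * q₂, mul_mem hq₁ hq₂, by simp [hq₂x, hq₁x]⟩
    | inv u hu ihu =>
      intro x
      obtain ⟨q, hq, hqx⟩ := ihu (u⁻¹ x)
      refine ⟨q⁻¹, inv_mem hq, ?_⟩
      have : q (u⁻¹ x) = x := by simpa using hqx
      calc q⁻¹ x = q⁻¹ (q (u⁻¹ x)) := by rw [this]
        _ = u⁻¹ x := by simp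
  intro x y
  obtain ⟨p, hp, hpx⟩ := htr x y
  obtain ⟨q, hq, hqx⟩ := key p hp x
  exact ⟨q, hq, by rw [hqx, hpx]⟩

/-- Incremental orbit-counting. -/
lemma count_induction {ι : Type*} [DecidableEq ι] [Finite β]
    (g : ι → Equiv.Perm β) (base : Finset ι) (T : Finset ι)
    (hstep : ∀ j ∈ T, ∀ S : Finset ι, S ⊆ T.erase j →
      orbCount (closure (g '' ↑(insert j (base ∪ S)))) <
        orbCount (closure (g '' ↑(base ∪ S)))) :
    T.card + orbCount (closure (g '' ↑(base ∪ T))) ≤ orbCount (closure (g '' ↑base)) := by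
  classical
  induction T using Finset.induction with
  | empty => simp
  | @insert j T' hj ih =>
    have h1 : orbCount (closure (g '' ↑(insert j (base ∪ T')))) <
        orbCount (closure (g '' ↑(base ∪ T'))) := by
      apply hstep j (Finset.mem_insert_self j T') T'
      rw [Finset.erase_insert hj]
    have h2 : T'.card + orbCount (closure (g '' ↑(base ∪ T'))) ≤
        orbCount (closure (g '' ↑base)) := by
      apply ih
      intro j' hj' S hS
      exact hstep j' (Finset.mem_insert_of_mem hj') S
        (hS.trans (Finset.erase_subset_erase j' (Finset.subset_insert j T')))
    have h3 : base ∪ insert j T' = insert j (base ∪ T') := by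
      ext k; simp [or_left_comm, or_assoc]
    rw [Finset.card_insert_of_notMem hj, h3]
    omega

end Aux

section Lift

variable {Ω B ι : Type*} (α : ι → Equiv.Perm Ω) (π : ι → Equiv.Perm B) (f : Ω → B)

lemma lift_fwd (hπ : ∀ j x, f (α j x) = π j (f x)) (s : Set ι) :
    ∀ g ∈ closure (α '' s), ∃ h ∈ closure (π '' s), ∀ x, f (g x) = h (f x) := by
  intro g hg
  induction hg using closure_induction with
  | mem u hu =>
    obtain ⟨j, hj, rfl⟩ := hu
    exact ⟨π j, subset_closure ⟨j, hj, rfl⟩, hπ j⟩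
  | one => exact ⟨1, one_mem _, by simp⟩
  | mul u v hu hv ihu ihv =>
    obtain ⟨h₁, hh₁, e₁⟩ := ihu
    obtain ⟨h₂, hh₂, e₂⟩ := ihv
    refine ⟨h₁ * h₂, mul_mem hh₁ hh₂, fun x => ?_⟩
    have : f (u (v x)) = h₁ (h₂ (f x)) := by rw [e₁, e₂]
    simpa using this
  | inv u hu ihu =>
    obtain ⟨h, hh, e⟩ := ihu
    refine ⟨h⁻¹, inv_mem hh, fun x => ?_⟩
    have h1 : f (u (u⁻¹ x)) = h (f (u⁻¹ x)) := e (u⁻¹ x)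
    have h2 : f x = h (f (u⁻¹ x)) := by simpa using h1
    have := congrArg (h⁻¹ : Equiv.Perm B) h2
    simpa using this.symm

lemma lift_bwd (hπ : ∀ j x, f (α j x) = π j (f x)) (s : Set ι) :
    ∀ h ∈ closure (π '' s), ∃ g ∈ closure (α '' s), ∀ x, f (g x) = h (f x) := by
  intro h hh
  induction hh using closure_induction with
  | mem u hu =>
    obtain ⟨j, hj, rfl⟩ := hu
    exact ⟨α j, subset_closure ⟨j, hj, rfl⟩, hπ j⟩
  | one => exact ⟨1, one_mem _, by simp⟩
  | mul u v hu hv ihu ihv =>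
    obtain ⟨g₁, hg₁, e₁⟩ := ihu
    obtain ⟨g₂, hg₂, e₂⟩ := ihv
    refine ⟨g₁ * g₂, mul_mem hg₁ hg₂, fun x => ?_⟩
    have : f (g₁ (g₂ x)) = u (v (f x)) := by rw [e₁, e₂]
    simpa using this
  | inv u hu ihu =>
    obtain ⟨g, hg, e⟩ := ihu
    refine ⟨g⁻¹, inv_mem hg, fun x => ?_⟩
    have h1 : f (g (g⁻¹ x)) = u (f (g⁻¹ x)) := e (g⁻¹ x)
    have h2 : f x = u (f (g⁻¹ x)) := by simpa using h1
    have := congrArg (u⁻¹ : Equiv.Perm B) h2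
    simpa using this.symm

end Lift

lemma main_bound {Ω : Type*} [Fintype Ω] {a b d : ℕ} (ha : 2 ≤ a) (hb : 2 ≤ b)
    (hcard : Fintype.card Ω = a * b)
    (α : Fin d → Equiv.Perm Ω)
    (htrans : ∀ x y : Ω, ∃ g ∈ closure (Set.range α), g x = y)
    (f : Ω → Fin b) (hfsize : ∀ c : Fin b, (f ⁻¹' {c}).ncard = a)
    (π : Fin d → Equiv.Perm (Fin b))
    (hπ : ∀ j : Fin d, ∀ x : Ω, f (α j x) = π j (f x))
    (hparab : ∀ j : Fin d,
      ¬ ∀ x y : Ω, ∃ g ∈ closure (α '' {l | l ≠ j}), g x = y)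
    (W : Finset (Fin d))
    (htransW : ∀ c c' : Fin b, ∃ h ∈ closure (π '' (↑W : Set (Fin d))), h c = c') :
    d ≤ W.card + a - 1 := by
  classical
  haveI : Nonempty Ω := by
    rw [← Fintype.card_pos_iff, hcard]
    positivity
  set T : Finset (Fin d) := Finset.univ \ W with hT
  have hstep : ∀ j ∈ T, ∀ S : Finset (Fin d), S ⊆ T.erase j →
      orbCount (closure (α '' ↑(insert j (W ∪ S)))) <
        orbCount (closure (α '' ↑(W ∪ S))) := by
    intro j hjT S hS
    have hjW : j ∉ W := by
      rw [hT, Finset.mem_sdiff] at hjT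
      exact hjT.2
    have hsub : (↑(W ∪ S) : Set (Fin d)) ⊆ {l | l ≠ j} := by
      intro k hk
      simp only [Finset.coe_union, Set.mem_union, Finset.mem_coe] at hk
      rcases hk with hk | hk
      · rintro rfl; exact hjW hk
      · exact (Finset.mem_erase.mp (hS hk)).1
    have hins : insert j {l : Fin d | l ≠ j} = Set.univ := by
      ext k
      simp only [Set.mem_insert_iff, Set.mem_setOf_eq, Set.mem_univ, iff_true]
      by_cases h : k = j
      · exact Or.inl h
      · exact Or.inr h
    have htr' : ∀ x y : Ω, ∃ p ∈ closure (α '' insert j {l : Fin d | l ≠ j}), p x = y := by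
      rw [hins, Set.image_univ]
      exact htrans
    obtain ⟨x, hx⟩ := exists_cross α {l : Fin d | l ≠ j} j htr' (hparab j)
    have hle : closure (α '' (↑(W ∪ S) : Set (Fin d))) ≤ closure (α '' {l | l ≠ j}) :=
      closure_mono (Set.image_mono (f := α) hsub)
    have hH : ¬ ∃ p ∈ closure (α '' (↑(W ∪ S) : Set (Fin d))), p x = α j x := by
      rintro ⟨p, hp, hpx⟩
      exact hx ⟨p, hle hp, hpx⟩
    have hHK : closure (α '' (↑(W ∪ S) : Set (Fin d))) ≤
        closure (α '' (↑(insert j (W ∪ S)) : Set (Fin d))) := by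
      apply Subgroup.closure_mono
      apply Set.image_mono
      exact_mod_cast Finset.subset_insert j (W ∪ S)
    have hK : α j ∈ closure (α '' (↑(insert j (W ∪ S)) : Set (Fin d))) :=
      subset_closure ⟨j, by simp, rfl⟩
    exact orbCount_lt hHK ⟨α j, hK, rfl⟩ hH
  have hcount := count_induction α W T hstep
  -- base bound : orbCount (closure (α '' ↑W)) ≤ a
  have hbase : orbCount (closure (α '' (↑W : Set (Fin d)))) ≤ a := by
    set c₀ : Fin b := ⟨0, by omega⟩ with hc₀
    have hreach : ∀ x : Ω, ∃ y : Ω,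
        (∃ g ∈ closure (α '' (↑W : Set (Fin d))), g x = y) ∧ f y = c₀ := by
      intro x
      obtain ⟨h, hh, he⟩ := htransW (f x) c₀
      obtain ⟨g, hg, hgf⟩ := lift_bwd α π f hπ (↑W) h hh
      exact ⟨g x, ⟨g, hg, rfl⟩, by rw [hgf x, he]⟩
    set H := closure (α '' (↑W : Set (Fin d))) with hH
    let ψ : Quotient (permOrbSetoid H) → ↥(f ⁻¹' {c₀}) := fun q =>
      ⟨(hreach q.out).choose, by
        have := (hreach q.out).choose_spec.2
        simp [Set.mem_preimage, this]⟩
    have hinj : Function.Injective ψ := by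
      intro q q' hqq
      have hval : (hreach q.out).choose = (hreach q'.out).choose :=
        congrArg Subtype.val hqq
      have r1 := (hreach q.out).choose_spec.1
      have r2 := (hreach q'.out).choose_spec.1
      rw [hval] at r1
      have rel : ∃ g ∈ H, g q.out = q'.out := by
        obtain ⟨g1, hg1, e1⟩ := r1
        obtain ⟨g2, hg2, e2⟩ := r2
        exact ⟨g2⁻¹ * g1, H.mul_mem (H.inv_mem hg2) hg1, by
          simp [Equiv.Perm.mul_apply, e1, ← e2]⟩
      calc q = ⟦q.out⟧ := (Quotient.out_eq q).symm
        _ = ⟦q'.out⟧ := Quotient.sound' rel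
        _ = q' := Quotient.out_eq q'
    have hcard1 : Nat.card (Quotient (permOrbSetoid H)) ≤ Nat.card ↥(f ⁻¹' {c₀}) :=
      Nat.card_le_card_of_injective ψ hinj
    have hcard2 : Nat.card ↥(f ⁻¹' {c₀}) = a := by
      rw [Nat.card_coe_set_eq, hfsize]
    rw [orbCount]
    omega
  have hpos : 1 ≤ orbCount (closure (α '' (↑(W ∪ T) : Set (Fin d)))) := orbCount_pos _
  have hTcard : T.card = d - W.card := by
    rw [hT, Finset.card_sdiff_of_subset (Finset.subset_univ W), Finset.card_univ, Fintype.card_fin]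
  have hWle : W.card ≤ d := by
    have := Finset.card_le_univ W
    rwa [Fintype.card_fin] at this
  omega

/-- For a transitive imprimitive sggi `Φ ≤ S_a ≀ S_b` (`b` blocks of size `a`,
`a, b ≥ 2`) with all maximal parabolic subgroups intransitive, if `X` is a set
of generators independently generating the block action, then
`d ≤ |X| + a - 1`, and consequently `d ≤ a + b - 2`. -/
theorem imprimitive_sggi_rank_bound
    {Ω : Type*} [Fintype Ω] {a b d : ℕ} (ha : 2 ≤ a) (hb : 2 ≤ b)
    (hcard : Fintype.card Ω = a * b)
    (α : Fin d → Equiv.Perm Ω)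
    (hinv : ∀ j, α j * α j = 1) (hne : ∀ j, α j ≠ 1)
    (hstring : ∀ i j : Fin d, ((i : ℕ) + 1 < (j : ℕ) ∨ (j : ℕ) + 1 < (i : ℕ)) →
      Commute (α i) (α j))
    (htrans : ∀ x y : Ω, ∃ g ∈ Subgroup.closure (Set.range α), g x = y)
    (f : Ω → Fin b) (hfsize : ∀ c : Fin b, (f ⁻¹' {c}).ncard = a)
    (π : Fin d → Equiv.Perm (Fin b))
    (hπ : ∀ j : Fin d, ∀ x : Ω, f (α j x) = π j (f x))
    (hparab : ∀ j : Fin d,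
      ¬ ∀ x y : Ω, ∃ g ∈ Subgroup.closure (α '' {l | l ≠ j}), g x = y)
    (X : Finset (Fin d))
    (hXgen : Subgroup.closure (π '' ↑X) = Subgroup.closure (Set.range π))
    (hXindep : ∀ j ∈ X, π j ∉ Subgroup.closure (π '' (↑X \ {j}))) :
    d ≤ X.card + a - 1 ∧ d ≤ a + b - 2 := by
  classical
  have hblock : ∀ c : Fin b, ∃ x : Ω, f x = c := by
    intro c
    have h0 : (f ⁻¹' {c}).ncard ≠ 0 := by rw [hfsize]; omega
    obtain ⟨x, hx⟩ := Set.nonempty_of_ncard_ne_zero h0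
    exact ⟨x, by simpa using hx⟩
  have htransπ : ∀ c c' : Fin b, ∃ h ∈ Subgroup.closure (Set.range π), h c = c' := by
    intro c c'
    obtain ⟨x, hx⟩ := hblock c
    obtain ⟨y, hy⟩ := hblock c'
    obtain ⟨g, hg, hgxy⟩ := htrans x y
    have hg' : g ∈ Subgroup.closure (α '' Set.univ) := by rwa [Set.image_univ]
    obtain ⟨h, hh, he⟩ := lift_fwd α π f hπ Set.univ g hg'
    rw [Set.image_univ] at hh
    refine ⟨h, hh, ?_⟩
    rw [← hx, ← he, hgxy, hy]
  set P : Finset (Fin d) → Prop := fun Y =>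
    ∀ c c' : Fin b, ∃ h ∈ Subgroup.closure (π '' (↑Y : Set (Fin d))), h c = c' with hPdef
  have hPuniv : P Finset.univ := by
    intro c c'
    rw [Finset.coe_univ, Set.image_univ]
    exact htransπ c c'
  obtain ⟨Y, hYmem, hYmin⟩ := Finset.exists_min_image
    ((Finset.univ : Finset (Finset (Fin d))).filter P) Finset.card
    ⟨Finset.univ, Finset.mem_filter.mpr ⟨Finset.mem_univ _, hPuniv⟩⟩
  have hPY : P Y := (Finset.mem_filter.mp hYmem).2
  have hYerase : ∀ j ∈ Y, ¬ P (Y.erase j) := by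
    intro j hj hPe
    have hmem : Y.erase j ∈ Finset.filter P Finset.univ :=
      Finset.mem_filter.mpr ⟨Finset.mem_univ _, hPe⟩
    have h1 := hYmin _ hmem
    have h2 := Finset.card_erase_of_mem hj
    have h3 : 0 < Y.card := Finset.card_pos.mpr ⟨j, hj⟩
    omega
  haveI : Nonempty (Fin b) := ⟨⟨0, by omega⟩⟩
  have hstepY : ∀ j ∈ Y, ∀ S : Finset (Fin d), S ⊆ Y.erase j →
      orbCount (Subgroup.closure (π '' ↑(insert j ((∅ : Finset (Fin d)) ∪ S)))) <
        orbCount (Subgroup.closure (π '' ↑((∅ : Finset (Fin d)) ∪ S))) := by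
    intro j hj S hS
    simp only [Finset.empty_union]
    have hins : insert j (↑(Y.erase j) : Set (Fin d)) = ↑Y := by
      rw [← Finset.coe_insert, Finset.insert_erase hj]
    have htr' : ∀ x y : Fin b,
        ∃ p ∈ Subgroup.closure (π '' insert j (↑(Y.erase j) : Set (Fin d))), p x = y := by
      rw [hins]; exact hPY
    obtain ⟨x, hx⟩ := exists_cross π (↑(Y.erase j)) j htr' (hYerase j hj)
    have hle : Subgroup.closure (π '' (↑S : Set (Fin d))) ≤
        Subgroup.closure (π '' (↑(Y.erase j) : Set (Fin d))) :=
      Subgroup.closure_mono (Set.image_mono (f := π) (Finset.coe_subset.mpr hS))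
    have hH : ¬ ∃ p ∈ Subgroup.closure (π '' (↑S : Set (Fin d))), p x = π j x := by
      rintro ⟨p, hp, hpx⟩
      exact hx ⟨p, hle hp, hpx⟩
    have hHK : Subgroup.closure (π '' (↑S : Set (Fin d))) ≤
        Subgroup.closure (π '' (↑(insert j S) : Set (Fin d))) :=
      Subgroup.closure_mono (Set.image_mono (f := π) (by exact_mod_cast Finset.subset_insert j S))
    have hK : π j ∈ Subgroup.closure (π '' (↑(insert j S) : Set (Fin d))) :=
      Subgroup.subset_closure ⟨j, by simp, rfl⟩
    exact orbCount_lt hHK ⟨π j, hK, rfl⟩ hH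
  have hcountY := count_induction π ∅ Y hstepY
  have hY1 : 1 ≤ orbCount (Subgroup.closure
      (π '' (↑((∅ : Finset (Fin d)) ∪ Y) : Set (Fin d)))) := orbCount_pos _
  have hYb : orbCount (Subgroup.closure (π '' (↑(∅ : Finset (Fin d)) : Set (Fin d)))) ≤ b := by
    have := orbCount_le_card
      (Subgroup.closure (π '' (↑(∅ : Finset (Fin d)) : Set (Fin d))))
    rwa [Nat.card_eq_fintype_card, Fintype.card_fin] at this
  have hYcard : Y.card ≤ b - 1 := by omega
  have hPX : ∀ c c' : Fin b, ∃ h ∈ Subgroup.closure (π '' (↑X : Set (Fin d))), h c = c' := by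
    intro c c'
    rw [hXgen]
    exact htransπ c c'
  have h1 := main_bound ha hb hcard α htrans f hfsize π hπ hparab X hPX
  have h2 := main_bound ha hb hcard α htrans f hfsize π hπ hparab Y hPY
  exact ⟨h1, by omega⟩
end
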